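/- arXiv:1409.2902 — 2 statements merged into one kernel-verified Lean document; each statement's English description precedes it below -/
import Mathlib

section
/- Suppose the iterates of the randomized Hildreth's algorithm satisfy the one-step inequality ‖x⁽ᵏ⁺¹⁾ − x*‖² ≤ ‖x⁽ᵏ⁾ − x*‖² − (2/α − 1)·e(Ax⁽ᵏ⁾ − b)_{i(k)}²/‖a_{i(k)}‖², where i(k) is drawn with probability ‖a_i‖²/‖A‖_F². If moreover the Hoffman bound ‖x − x*‖ ≤ L‖e(Ax − b)‖ holds for all x, then E[‖x⁽ᵏ⁺¹⁾ − x*‖²] ≤ (1 − (2/α − 1)/(L²‖A‖_F²))·E[‖x⁽ᵏ⁾ − x*‖²]. -/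
open scoped RealInnerProductSpace
open MeasureTheory

/-- Randomized Hildreth step: the pointwise one-step inequality, the row
distribution P(i) = ‖a i‖²/‖A‖_F², and the Hoffman bound together give linear
decay of the mean squared error. -/
theorem stmt7 {m n : ℕ} (a : Fin m → EuclideanSpace ℝ (Fin n))
    (ha : ∀ i, a i ≠ 0) (b : Fin m → ℝ) (eqRow : Fin m → Bool)
    (α L : ℝ) (hα : α ∈ Set.Ioo (0 : ℝ) 2) (hL : 0 < L)
    (xs : EuclideanSpace ℝ (Fin n))
    (e : EuclideanSpace ℝ (Fin n) → Fin m → ℝ)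
    (he : ∀ x i, e x i =
      if eqRow i then ⟪a i, x⟫ - b i else max 0 (⟪a i, x⟫ - b i))
    {Ω : Type*} [MeasurableSpace Ω] (μ : Measure Ω) [IsProbabilityMeasure μ]
    (ν : Measure (Fin m)) [IsProbabilityMeasure ν]
    (hν : ∀ i : Fin m, ν {i} = ENNReal.ofReal (‖a i‖ ^ 2 / ∑ j, ‖a j‖ ^ 2))
    (Xk : Ω → EuclideanSpace ℝ (Fin n))
    (Xk1 : Ω × Fin m → EuclideanSpace ℝ (Fin n))
    (hXkInt : Integrable (fun ω => ‖Xk ω - xs‖ ^ 2) μ)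
    (hXk1Meas : AEStronglyMeasurable (fun p => ‖Xk1 p - xs‖ ^ 2) (μ.prod ν))
    (hstep : ∀ ω i, ‖Xk1 (ω, i) - xs‖ ^ 2
      ≤ ‖Xk ω - xs‖ ^ 2 - (2 / α - 1) * (e (Xk ω) i) ^ 2 / ‖a i‖ ^ 2)
    (hHoffman : ∀ x, ‖x - xs‖ ≤ L * Real.sqrt (∑ i, (e x i) ^ 2)) :
    ∫ p, ‖Xk1 p - xs‖ ^ 2 ∂(μ.prod ν)
      ≤ (1 - (2 / α - 1) / (L ^ 2 * ∑ j, ‖a j‖ ^ 2))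
          * ∫ ω, ‖Xk ω - xs‖ ^ 2 ∂μ := by
  obtain ⟨hα0, hα2⟩ := hα
  have hc : 0 < 2 / α - 1 := by
    have : 1 < 2 / α := (one_lt_div hα0).2 hα2
    linarith
  set c : ℝ := 2 / α - 1 with hc_def
  -- Fin m is nonempty
  have hne : Nonempty (Fin m) := by
    by_contra h
    have h1 : ν Set.univ = 1 := measure_univ
    rw [Set.univ_eq_empty_iff.2 (not_nonempty_iff.1 h)] at h1
    simp at h1
  have hS : 0 < ∑ j, ‖a j‖ ^ 2 := by
    apply Finset.sum_pos
    · intro i _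
      have h0 : ‖a i‖ ≠ 0 := norm_ne_zero_iff.2 (ha i)
      positivity
    · exact Finset.univ_nonempty
  set S : ℝ := ∑ j, ‖a j‖ ^ 2 with hS_def
  -- weights
  have hw : ∀ i : Fin m, (ν {i}).toReal = ‖a i‖ ^ 2 / S := by
    intro i
    rw [hν i, ENNReal.toReal_ofReal]
    positivity
  set K : ℝ := 1 - c / (L ^ 2 * S) with hK_def
  -- pointwise bound on the inner integral
  have hinner : ∀ ω, ∫ i, ‖Xk1 (ω, i) - xs‖ ^ 2 ∂ν ≤ K * ‖Xk ω - xs‖ ^ 2 := by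
    intro ω
    rw [integral_fintype Integrable.of_finite]
    have hsum : ∑ i, (ν {i}).toReal • ‖Xk1 (ω, i) - xs‖ ^ 2
        ≤ ∑ i, (‖a i‖ ^ 2 / S) *
            (‖Xk ω - xs‖ ^ 2 - c * (e (Xk ω) i) ^ 2 / ‖a i‖ ^ 2) := by
      apply Finset.sum_le_sum
      intro i _
      rw [hw i, smul_eq_mul]
      have hwnn : 0 ≤ ‖a i‖ ^ 2 / S := by positivity
      exact mul_le_mul_of_nonneg_left (hstep ω i) hwnn
    refine hsum.trans ?_
    have hexp : ∀ i : Fin m, (‖a i‖ ^ 2 / S) *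
        (‖Xk ω - xs‖ ^ 2 - c * (e (Xk ω) i) ^ 2 / ‖a i‖ ^ 2)
        = (‖a i‖ ^ 2 / S) * ‖Xk ω - xs‖ ^ 2 - (c / S) * (e (Xk ω) i) ^ 2 := by
      intro i
      have hai : (‖a i‖ : ℝ) ^ 2 ≠ 0 :=
        pow_ne_zero 2 (norm_ne_zero_iff.2 (ha i))
      field_simp
      have hinv : ‖a i‖ ^ 2 * ‖a i‖⁻¹ ^ 2 = 1 := by
        rw [← mul_pow, mul_inv_cancel₀ (norm_ne_zero_iff.2 (ha i)), one_pow]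
      linear_combination (-(c * e (Xk ω) i ^ 2)) * hinv
    rw [Finset.sum_congr rfl (fun i _ => hexp i), Finset.sum_sub_distrib,
      ← Finset.sum_mul, ← Finset.mul_sum, ← Finset.sum_div]
    have hSone : S / S = 1 := div_self hS.ne'
    rw [hSone, one_mul]
    -- Hoffman: ‖Xk ω - xs‖² ≤ L² * ∑ e²
    have hnn : (0:ℝ) ≤ ∑ i, (e (Xk ω) i) ^ 2 :=
      Finset.sum_nonneg fun i _ => sq_nonneg _
    have hH := hHoffman (Xk ω)
    have hH2 : ‖Xk ω - xs‖ ^ 2 ≤ L ^ 2 * ∑ i, (e (Xk ω) i) ^ 2 := by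
      have h1 : ‖Xk ω - xs‖ ^ 2 ≤ (L * Real.sqrt (∑ i, (e (Xk ω) i) ^ 2)) ^ 2 :=
        pow_le_pow_left₀ (norm_nonneg _) hH 2
      rwa [mul_pow, Real.sq_sqrt hnn] at h1
    have hfrac : ‖Xk ω - xs‖ ^ 2 / L ^ 2 ≤ ∑ i, (e (Xk ω) i) ^ 2 := by
      rw [div_le_iff₀ (by positivity)]
      linarith [hH2]
    have hstep2 : (c / S) * (‖Xk ω - xs‖ ^ 2 / L ^ 2)
        ≤ (c / S) * ∑ i, (e (Xk ω) i) ^ 2 :=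
      mul_le_mul_of_nonneg_left hfrac (by positivity)
    have : ‖Xk ω - xs‖ ^ 2 - c / S * ∑ i, (e (Xk ω) i) ^ 2
        ≤ ‖Xk ω - xs‖ ^ 2 - (c / S) * (‖Xk ω - xs‖ ^ 2 / L ^ 2) := by
      linarith
    refine this.trans ?_
    have : K * ‖Xk ω - xs‖ ^ 2
        = ‖Xk ω - xs‖ ^ 2 - (c / S) * (‖Xk ω - xs‖ ^ 2 / L ^ 2) := by
      rw [hK_def]
      field_simp
    rw [this]
  -- integrability of the product function
  have hgInt : Integrable (fun p : Ω × Fin m => ‖Xk p.1 - xs‖ ^ 2) (μ.prod ν) := by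
    have hmap : (μ.prod ν).map Prod.fst = μ := by
      rw [Measure.map_fst_prod, measure_univ, one_smul]
    have := (integrable_map_measure
      (by rw [hmap]; exact hXkInt.aestronglyMeasurable)
      measurable_fst.aemeasurable (f := Prod.fst)
      (g := fun ω => ‖Xk ω - xs‖ ^ 2)).1 (by rwa [hmap])
    exact this
  have hfInt : Integrable (fun p : Ω × Fin m => ‖Xk1 p - xs‖ ^ 2) (μ.prod ν) := by
    apply hgInt.mono' hXk1Meas
    filter_upwards with p
    rw [Real.norm_eq_abs, abs_of_nonneg (by positivity)]
    have h := hstep p.1 p.2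
    have hterm : 0 ≤ c * (e (Xk p.1) p.2) ^ 2 / ‖a p.2‖ ^ 2 := by positivity
    calc ‖Xk1 p - xs‖ ^ 2 = ‖Xk1 (p.1, p.2) - xs‖ ^ 2 := by rw [Prod.mk.eta]
      _ ≤ _ := by linarith [hstep p.1 p.2]
  rw [integral_prod _ hfInt]
  calc ∫ ω, ∫ i, ‖Xk1 (ω, i) - xs‖ ^ 2 ∂ν ∂μ
      ≤ ∫ ω, K * ‖Xk ω - xs‖ ^ 2 ∂μ := by
        apply integral_mono hfInt.integral_prod_left (hXkInt.const_mul K)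
        intro ω
        exact hinner ω
    _ = K * ∫ ω, ‖Xk ω - xs‖ ^ 2 ∂μ := integral_const_mul K _
end

section
/- For a consistent system of linear equations Ax = b with A of full column rank, the quantity μ = inf_{x ∉ S} max_i d(x, H_i)/d(x, S) satisfies μ ≥ σ_min(A)/‖A‖_F, where H_i = {x : ⟨a_i, x⟩ = b_i} are the constraint hyperplanes and S = ∩_i H_i is the solution set. -/
open scoped RealInnerProductSpace

/-- μ = inf_{x∉S} max_i d(x,H_i)/d(x,S) ≥ σ_min(A)/‖A‖_F for a consistent system of
equations with unique solution xs: for every x ≠ xs, some hyperplane distance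
|⟪a i,x⟫ − b i|/‖a i‖ is at least (σ/√(∑‖a i‖²))·‖x − xs‖. -/
theorem stmt14 {m n : ℕ} (a : Fin m → EuclideanSpace ℝ (Fin n))
    (ha : ∀ i, a i ≠ 0) (b : Fin m → ℝ)
    (σ : ℝ) (hσ : 0 < σ)
    (hmin : ∀ x : EuclideanSpace ℝ (Fin n),
      σ * ‖x‖ ≤ Real.sqrt (∑ i, ⟪a i, x⟫ ^ 2))
    (xs : EuclideanSpace ℝ (Fin n)) (hxs : ∀ i, ⟪a i, xs⟫ = b i) :
    ∀ x : EuclideanSpace ℝ (Fin n), x ≠ xs →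
      ∃ i, σ / Real.sqrt (∑ j, ‖a j‖ ^ 2) * ‖x - xs‖
        ≤ |⟪a i, x⟫ - b i| / ‖a i‖ := by
  intro x hx
  set y := x - xs with hy
  have hyne : y ≠ 0 := sub_ne_zero.mpr hx
  have hynorm : (0 : ℝ) < ‖y‖ := norm_pos_iff.mpr hyne
  have hinner : ∀ i, ⟪a i, x⟫ - b i = ⟪a i, y⟫ := by
    intro i
    rw [hy, inner_sub_right, hxs i]
  -- handle m = 0
  rcases Nat.eq_zero_or_pos m with hm | hm
  · exfalso
    have := hmin y
    have h0 : (∑ i : Fin m, ⟪a i, y⟫ ^ 2) = 0 := by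
      subst hm; simp
    rw [h0, Real.sqrt_zero] at this
    nlinarith
  by_contra hcon
  push_neg at hcon
  set F : ℝ := ∑ j, ‖a j‖ ^ 2 with hF
  have hFpos : 0 < F := by
    obtain ⟨i⟩ := Fin.pos_iff_nonempty.mp hm
    apply Finset.sum_pos'
    · intro j _; positivity
    · exact ⟨i, Finset.mem_univ i, pow_pos (norm_pos_iff.mpr (ha i)) 2⟩
  have hsqF : 0 < Real.sqrt F := Real.sqrt_pos.mpr hFpos
  set c : ℝ := σ / Real.sqrt F with hc
  have hcpos : 0 < c := div_pos hσ hsqF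
  -- each term bound
  have hterm : ∀ i, ⟪a i, y⟫ ^ 2 < c ^ 2 * ‖y‖ ^ 2 * ‖a i‖ ^ 2 := by
    intro i
    have h1 := hcon i
    rw [hinner i] at h1
    have hai : 0 < ‖a i‖ := norm_pos_iff.mpr (ha i)
    have h2 : |⟪a i, y⟫| < c * ‖y‖ * ‖a i‖ := by
      rw [div_lt_iff₀ hai] at h1
      linarith
    have h3 : 0 ≤ |⟪a i, y⟫| := abs_nonneg _
    nlinarith [sq_abs ⟪a i, y⟫]
  have hsum : (∑ i, ⟪a i, y⟫ ^ 2) < c ^ 2 * ‖y‖ ^ 2 * F := by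
    calc (∑ i, ⟪a i, y⟫ ^ 2) < ∑ i, c ^ 2 * ‖y‖ ^ 2 * ‖a i‖ ^ 2 := by
          apply Finset.sum_lt_sum_of_nonempty
          · exact Finset.univ_nonempty_iff.mpr (Fin.pos_iff_nonempty.mp hm)
          · intro i _; exact hterm i
      _ = c ^ 2 * ‖y‖ ^ 2 * F := by rw [hF, Finset.mul_sum]
  have hc2F : c ^ 2 * F = σ ^ 2 := by
    rw [hc, div_pow, Real.sq_sqrt hFpos.le, div_mul_cancel₀]
    exact hFpos.ne'
  have hlow := hmin y
  have hσy : 0 ≤ σ * ‖y‖ := by positivity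
  have hlow2 : σ ^ 2 * ‖y‖ ^ 2 ≤ ∑ i, ⟪a i, y⟫ ^ 2 := by
    have hs : 0 ≤ ∑ i, ⟪a i, y⟫ ^ 2 := Finset.sum_nonneg fun i _ => sq_nonneg _
    nlinarith [Real.sq_sqrt hs, Real.sqrt_nonneg (∑ i, ⟪a i, y⟫ ^ 2)]
  nlinarith
end
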